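/- In a Schelling game on a cycle G with |T1| ≥ 2 and |T2| ≥ 2, every swap-equilibrium v has edge-robustness zero: there exists a single edge e of G such that v is not a swap-equilibrium on G − {e}. -/

import Mathlib

open SimpleGraph

variable {V : Type*}

/-- Utility of the agent occupying vertex `v` in graph `H` under type assignment `τ`:
the fraction of same-type agents among occupied neighbors (0 if no neighbors). -/
noncomputable def utility (H : SimpleGraph V) (τ : V → Bool) (v : V) : ℚ := by
  classical
  exact if H.neighborSet v = ∅ then 0
    else ((H.neighborSet v ∩ {w | τ w = τ v}).ncard : ℚ) / ((H.neighborSet v).ncard : ℚ)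

/-- The type function after the agents on vertices `i` and `j` exchange their vertices. -/
noncomputable def swapAt (τ : V → Bool) (i j : V) : V → Bool := fun v => by
  classical
  exact if v = i then τ j else if v = j then τ i else τ v

/-- The swap of the (distinct-type) agents on `i` and `j` strictly increases both utilities. -/
def ProfitableSwap (H : SimpleGraph V) (τ : V → Bool) (i j : V) : Prop :=
  τ i ≠ τ j ∧
  utility H τ i < utility H (swapAt τ i j) j ∧
  utility H τ j < utility H (swapAt τ i j) i

/-- Swap-equilibrium: no profitable swap exists. -/
def IsSwapEq (H : SimpleGraph V) (τ : V → Bool) : Prop :=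
  ∀ i j : V, ¬ ProfitableSwap H τ i j

/-- The cycle graph on `Fin n` (vertices `0,…,n-1` in cyclic order). -/
def cycleG (n : ℕ) : SimpleGraph (Fin n) where
  Adj u v := u ≠ v ∧ ((u.val + 1) % n = v.val ∨ (v.val + 1) % n = u.val)
  symm := ⟨fun u v h => ⟨h.1.symm, h.2.symm⟩⟩
  loopless := ⟨fun u h => h.1 rfl⟩

/-!
In a swap-equilibrium on the cycle no agent is isolated: an isolated agent profits from swapping
with an agent of the other type that borders a block of the isolated agent's type. Hence at a type
boundary `b | b + 1` the vertex `b - 1` has the type of `b`, and deleting the edge `{b - 1, b}`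
leaves the agent on `b` with utility `0`. It then swaps profitably with the last agent `z` of the
block starting at `b + 1`: it gains the neighbour `z + 1` of its own type, while the agent from `z`
moves next to `b + 1`, its own type, and reaches utility `1`.
-/

open scoped Fin.CommRing Fin.NatCast

theorem Bool.eq_of_ne_of_ne {a b c : Bool} (ha : a ≠ c) (hb : b ≠ c) : a = b := by
  cases a <;> cases b <;> cases c <;> simp_all

section Utility

variable {V : Type*} {H : SimpleGraph V} {τ : V → Bool} {v w : V}

-- The empty neighbourhood is covered by the junk value `0 / 0 = 0`.
theorem utility_eq_div (H : SimpleGraph V) (τ : V → Bool) (v : V) :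
    utility H τ v =
      ((H.neighborSet v ∩ {w | τ w = τ v}).ncard : ℚ) / (H.neighborSet v).ncard := by
  classical
  unfold utility
  split_ifs with h
  · simp [h]
  · rfl

theorem utility_eq_zero (h : ∀ w ∈ H.neighborSet v, τ w ≠ τ v) : utility H τ v = 0 := by
  have : H.neighborSet v ∩ {w | τ w = τ v} = ∅ :=
    Set.eq_empty_of_forall_notMem fun w hw => h w hw.1 hw.2
  rw [utility_eq_div, this, Set.ncard_empty, Nat.cast_zero, zero_div]

variable [Finite V]

theorem utility_pos (hw : w ∈ H.neighborSet v) (h : τ w = τ v) : 0 < utility H τ v := by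
  rw [utility_eq_div]
  have hsame : 0 < (H.neighborSet v ∩ {w | τ w = τ v}).ncard :=
    (Set.ncard_pos (Set.toFinite _)).2 ⟨w, hw, h⟩
  have hall : 0 < (H.neighborSet v).ncard := (Set.ncard_pos (Set.toFinite _)).2 ⟨w, hw⟩
  positivity

theorem utility_lt_one (hw : w ∈ H.neighborSet v) (h : τ w ≠ τ v) : utility H τ v < 1 := by
  rw [utility_eq_div]
  have hlt : (H.neighborSet v ∩ {w | τ w = τ v}).ncard < (H.neighborSet v).ncard :=
    Set.ncard_lt_ncard ⟨Set.inter_subset_left, fun hsub => h (hsub hw).2⟩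
  have hall : (0 : ℚ) < (H.neighborSet v).ncard := by exact_mod_cast (Nat.zero_le _).trans_lt hlt
  rw [div_lt_one hall]
  exact_mod_cast hlt

theorem utility_eq_one (hw : w ∈ H.neighborSet v) (h : ∀ w ∈ H.neighborSet v, τ w = τ v) :
    utility H τ v = 1 := by
  have : H.neighborSet v ∩ {w | τ w = τ v} = H.neighborSet v :=
    Set.inter_eq_left.2 fun w hw => h w hw
  have hall : (0 : ℚ) < (H.neighborSet v).ncard := by
    exact_mod_cast (Set.ncard_pos (Set.toFinite _)).2 ⟨w, hw⟩
  rw [utility_eq_div, this, div_self hall.ne']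

end Utility

section Swap

variable {V : Type*} {τ : V → Bool} {i j v : V}

theorem swapAt_apply_left (τ : V → Bool) (i j : V) : swapAt τ i j i = τ j := by
  simp [swapAt]

theorem swapAt_apply_right (τ : V → Bool) (i j : V) : swapAt τ i j j = τ i := by
  by_cases h : j = i
  · subst h; simp [swapAt]
  · simp [swapAt, h]

theorem swapAt_apply_of_ne (hi : v ≠ i) (hj : v ≠ j) : swapAt τ i j v = τ v := by
  simp [swapAt, hi, hj]

theorem swapAt_comm (τ : V → Bool) (i j : V) : swapAt τ i j = swapAt τ j i := by
  funext v
  by_cases hi : v = i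
  · subst hi; rw [swapAt_apply_left, swapAt_apply_right]
  · by_cases hj : v = j
    · subst hj; rw [swapAt_apply_left, swapAt_apply_right]
    · rw [swapAt_apply_of_ne hi hj, swapAt_apply_of_ne hj hi]

variable [Finite V] {H : SimpleGraph V}

theorem utility_swapAt_pos {y : V} (hy : H.Adj j y) (hyi : y ≠ i) (hτ : τ y = τ i) :
    0 < utility H (swapAt τ i j) j := by
  refine utility_pos hy ?_
  rw [swapAt_apply_of_ne hyi hy.ne', swapAt_apply_right, hτ]

theorem profitableSwap_of_not_adj {p : V} (hij : τ i ≠ τ j) (hnadj : ¬ H.Adj i j)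
    (hi : ∀ w ∈ H.neighborSet i, τ w ≠ τ i) (hne : (H.neighborSet i).Nonempty)
    (hjp : H.Adj j p) (hp : τ p = τ i) : ProfitableSwap H τ i j := by
  obtain ⟨x, hx⟩ := hne
  refine ⟨hij, ?_, ?_⟩
  · rw [utility_eq_zero hi]
    exact utility_swapAt_pos hjp (fun h => hnadj (h ▸ hjp.symm)) hp
  · have hall : ∀ w ∈ H.neighborSet i, swapAt τ i j w = swapAt τ i j i := by
      intro w hw
      rw [swapAt_apply_of_ne (H.ne_of_adj hw).symm (by rintro rfl; exact hnadj hw),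
        swapAt_apply_left]
      exact Bool.eq_of_ne_of_ne (hi w hw) hij.symm
    rw [utility_eq_one hx hall]
    exact utility_lt_one hjp (hp ▸ hij)

theorem profitableSwap_of_utility_eq_zero {x y : V} (hij : τ i ≠ τ j)
    (hi : ∀ w ∈ H.neighborSet i, τ w ≠ τ i) (hj : ∀ w ∈ H.neighborSet j, τ w ≠ τ j)
    (hx : H.Adj i x) (hxj : x ≠ j) (hy : H.Adj j y) (hyi : y ≠ i) :
    ProfitableSwap H τ i j := by
  refine ⟨hij, ?_, ?_⟩
  · rw [utility_eq_zero hi]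
    exact utility_swapAt_pos hy hyi (Bool.eq_of_ne_of_ne (hj y hy) hij)
  · rw [utility_eq_zero hj, swapAt_comm]
    exact utility_swapAt_pos hx hxj (Bool.eq_of_ne_of_ne (hi x hx) hij.symm)

end Swap

section Cycle

variable {n : ℕ} [NeZero n]

theorem Fin.natCast_ne_zero_of_pos_of_lt {k : ℕ} (h0 : 0 < k) (hk : k < n) : (k : Fin n) ≠ 0 :=
  fun h => h0.ne' (Nat.eq_zero_of_dvd_of_lt (Fin.natCast_eq_zero.1 h) hk)

theorem cycleG_adj_iff {u v : Fin n} :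
    (cycleG n).Adj u v ↔ u ≠ v ∧ (u + 1 = v ∨ v + 1 = u) := by
  have key : ∀ a b : Fin n, (a.val + 1) % n = b.val ↔ a + 1 = b := fun a b => by
    rw [Fin.ext_iff, Fin.val_add, Fin.val_one', Nat.add_mod_mod]
  exact and_congr Iff.rfl (or_congr (key u v) (key v u))

theorem cycleG_adj_iff_eq_sub_one_or_eq_add_one (hn : 2 ≤ n) {u v : Fin n} :
    (cycleG n).Adj u v ↔ v = u - 1 ∨ v = u + 1 := by
  have h1 : (1 : Fin n) ≠ 0 := by exact_mod_cast Fin.natCast_ne_zero_of_pos_of_lt one_pos hn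
  rw [cycleG_adj_iff]
  constructor
  · rintro ⟨-, h | h⟩
    · exact Or.inr h.symm
    · exact Or.inl (eq_sub_of_add_eq h)
  · rintro (rfl | rfl)
    · exact ⟨fun h => h1 (by linear_combination h), Or.inr (sub_add_cancel u 1)⟩
    · exact ⟨fun h => h1 (by linear_combination -h), Or.inl rfl⟩

theorem exists_run_end (τ : Fin n → Bool) (c : Fin n) {d : Fin n} (hd : τ d ≠ τ c) :
    ∃ j : ℕ, (∀ i ≤ j, τ (c + i) = τ c) ∧ τ (c + j + 1) ≠ τ c := by
  classical
  have hex : ∃ m : ℕ, τ (c + m) ≠ τ c :=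
    ⟨(d - c).val, by rwa [Fin.cast_val_eq_self, add_sub_cancel]⟩
  have h0 : Nat.find hex ≠ 0 := fun h => Nat.find_spec hex (by rw [h, Nat.cast_zero, add_zero])
  refine ⟨Nat.find hex - 1, fun i hi => not_not.1 (Nat.find_min hex (by omega)), ?_⟩
  have hend := Nat.find_spec hex
  rwa [← Nat.sub_add_cancel (Nat.one_le_iff_ne_zero.2 h0), Nat.cast_add, Nat.cast_one,
    ← add_assoc] at hend

theorem exists_apply_add_one_ne {τ : Fin n → Bool} {c d : Fin n} (hd : τ d ≠ τ c) :
    ∃ b, τ (b + 1) ≠ τ b := by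
  obtain ⟨j, hrun, hend⟩ := exists_run_end τ c hd
  exact ⟨c + j, by rwa [hrun j le_rfl]⟩

theorem run_sub_one_eq {τ : Fin n → Bool} {c : Fin n} {j : ℕ}
    (hrun : ∀ i ≤ j, τ (c + i) = τ c) (hj : c + j ≠ c) : τ (c + j - 1) = τ c := by
  have hj0 : j ≠ 0 := by
    rintro rfl
    exact hj (by rw [Nat.cast_zero, add_zero])
  have hpred : c + j - 1 = c + ((j - 1 : ℕ) : Fin n) := by
    rw [Nat.cast_sub (Nat.one_le_iff_ne_zero.2 hj0), Nat.cast_one]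
    ring
  rw [hpred, hrun _ (Nat.sub_le j 1)]

theorem IsSwapEq.same_type_pred_or_succ_cycleG {τ : Fin n → Bool}
    (heq : IsSwapEq (cycleG n) τ) {u v : Fin n} (huv : u ≠ v) (hu : τ u = τ v) :
    τ (v - 1) = τ v ∨ τ (v + 1) = τ v := by
  have hn : 2 ≤ n := by
    have := Fin.val_ne_of_ne huv
    omega
  have hadj {x y : Fin n} := cycleG_adj_iff_eq_sub_one_or_eq_add_one (u := x) (v := y) hn
  by_contra! hiso
  obtain ⟨hl, hr⟩ := hiso
  have hv : ∀ x ∈ (cycleG n).neighborSet v, τ x ≠ τ v := by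
    intro x hx
    rcases hadj.1 hx with rfl | rfl <;> assumption
  obtain ⟨j, hrun, hend⟩ := exists_run_end τ u (d := v + 1) (by rwa [hu])
  set p := u + (j : Fin n)
  have hp : τ p = τ v := (hrun j le_rfl).trans hu
  have hw : τ (p + 1) ≠ τ v := hu ▸ hend
  have hpv : p ≠ v := fun hpv =>
    hl (by rw [← hu, ← hpv]; exact run_sub_one_eq hrun (hpv.trans_ne huv.symm))
  by_cases hwv : p + 1 + 1 = v
  · have hw' : ∀ x ∈ (cycleG n).neighborSet (p + 1), τ x ≠ τ (p + 1) := by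
      intro x hx
      rcases hadj.1 hx with rfl | rfl
      · rw [add_sub_cancel_right, hp]; exact hw.symm
      · rw [hwv]; exact hw.symm
    exact heq v (p + 1) (profitableSwap_of_utility_eq_zero hw.symm hv hw'
      (hadj.2 (Or.inr rfl)) (fun h => hpv (add_right_cancel h.symm))
      (hadj.2 (Or.inl (add_sub_cancel_right p 1).symm)) hpv)
  · have hnadj : ¬ (cycleG n).Adj v (p + 1) := by
      rw [hadj]
      rintro (h | h)
      · exact hwv (by rw [h, sub_add_cancel])
      · exact hpv (add_right_cancel h)
    exact heq v (p + 1) (profitableSwap_of_not_adj hw.symm hnadj hv ⟨v + 1, hadj.2 (Or.inr rfl)⟩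
      (hadj.2 (Or.inl (add_sub_cancel_right p 1).symm)) hp)

theorem not_isSwapEq_cycleG_deleteEdges (hn : 3 ≤ n) {τ : Fin n → Bool} {b z : Fin n}
    (hb0 : τ (b - 1) = τ b) (hb1 : τ (b + 1) ≠ τ b) (hz : τ z ≠ τ b) (hz1 : τ (z + 1) = τ b)
    (hzb : z ≠ b + 1) : ¬ IsSwapEq ((cycleG n).deleteEdges {s(b - 1, b)}) τ := by
  have hadj {x y : Fin n} := cycleG_adj_iff_eq_sub_one_or_eq_add_one (u := x) (v := y) (by omega)
  have h1 : (1 : Fin n) ≠ 0 := by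
    exact_mod_cast Fin.natCast_ne_zero_of_pos_of_lt one_pos (by omega)
  have h2 : (2 : Fin n) ≠ 0 := by
    exact_mod_cast Fin.natCast_ne_zero_of_pos_of_lt two_pos (by omega)
  have hleaf : ∀ x, ((cycleG n).deleteEdges {s(b - 1, b)}).Adj b x ↔ x = b + 1 := by
    intro x
    simp only [deleteEdges_adj, hadj, Set.mem_singleton_iff, Sym2.eq_iff, true_and]
    constructor
    · rintro ⟨rfl | rfl, h⟩
      · exact absurd (Or.inr rfl) h
      · rfl
    · rintro rfl
      refine ⟨Or.inr rfl, ?_⟩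
      rintro (⟨h, -⟩ | h)
      · exact h1 (by linear_combination h)
      · exact h2 (by linear_combination h)
  have hzb0 : z ≠ b - 1 := fun h => hz (h ▸ hb0)
  have hzb' : z ≠ b := fun h => hz (h ▸ rfl)
  intro heq
  refine heq b z (profitableSwap_of_not_adj hz.symm ?_ ?_ ⟨b + 1, (hleaf _).2 rfl⟩ ?_ hz1)
  · rw [hleaf]; exact hzb
  · intro x hx
    rw [mem_neighborSet, hleaf] at hx
    rw [hx]; exact hb1
  · rw [deleteEdges_adj, hadj]
    refine ⟨Or.inr rfl, ?_⟩
    simp [hzb0, hzb']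

end Cycle

/-- On a cycle with at least two agents of each type, every swap-equilibrium has
edge-robustness zero: some single edge deletion makes it unstable. -/
theorem cycle_edge_robustness_zero (n : ℕ) (τ : Fin n → Bool)
    (h1 : 2 ≤ {v : Fin n | τ v = true}.ncard)
    (h2 : 2 ≤ {v : Fin n | τ v = false}.ncard)
    (heq : IsSwapEq (cycleG n) τ) :
    ∃ e ∈ (cycleG n).edgeSet, ¬ IsSwapEq ((cycleG n).deleteEdges {e}) τ := by
  have hcard := Set.ncard_add_ncard_compl {v : Fin n | τ v = true}
  simp only [Set.compl_ofPred, Bool.not_eq_true, Nat.card_eq_fintype_card, Fintype.card_fin]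
    at hcard
  have : NeZero n := ⟨by omega⟩
  have hsame : ∀ v, τ (v - 1) = τ v ∨ τ (v + 1) = τ v := fun v => by
    obtain ⟨u, hu, huv⟩ := Set.exists_ne_of_one_lt_ncard (s := {u | τ u = τ v})
      (by cases τ v <;> omega) v
    exact heq.same_type_pred_or_succ_cycleG huv hu
  obtain ⟨b, hb⟩ : ∃ b, τ (b + 1) ≠ τ b := by
    obtain ⟨t, ht⟩ := Set.nonempty_of_ncard_ne_zero (s := {v | τ v = true}) (by omega)
    obtain ⟨f, hf⟩ := Set.nonempty_of_ncard_ne_zero (s := {v | τ v = false}) (by omega)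
    exact exists_apply_add_one_ne (c := t) (d := f) (by simp_all)
  have hb0 : τ (b - 1) = τ b := (hsame b).resolve_right hb
  have hb2 : τ (b + 1 + 1) = τ (b + 1) :=
    (hsame (b + 1)).resolve_left (by rw [add_sub_cancel_right]; exact hb.symm)
  obtain ⟨j, hrun, hend⟩ := exists_run_end τ (b + 1) (d := b) hb.symm
  refine ⟨s(b - 1, b), ?_, not_isSwapEq_cycleG_deleteEdges (by omega) hb0 hb
    (z := b + 1 + j) (by rwa [hrun j le_rfl]) (Bool.eq_of_ne_of_ne hend hb.symm) ?_⟩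
  · rw [mem_edgeSet, cycleG_adj_iff_eq_sub_one_or_eq_add_one (by omega)]
    exact Or.inr (sub_add_cancel b 1).symm
  · intro hz
    rw [hz] at hend
    exact hend hb2
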